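/- Let (P, L₁, …, L_k) be a net of order n and degree k with n > (k−1)^2. Let x₁ ≠ x₂ be collinear points, let ℓ be the unique line containing both x₁ and x₂, and let H = {x₁, x₂} ∪ (N(x₁) ∩ N(x₂)), where N(x) denotes the neighborhood of x in the net graph. Then ℓ = { x ∈ H : |N(x) ∩ H| ≥ n − 1 }. In particular, the line through two adjacent vertices of a net graph is determined by degrees inside H. -/

import Mathlib

/-- Two points of a net with parallel classes `L` are collinear if some line
(a member of some parallel class) contains both. -/
def NetCollinear {P : Type*} {k : ℕ} (L : Fin k → Finset (Finset P)) (p q : P) : Prop :=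
  ∃ i : Fin k, ∃ m ∈ L i, p ∈ m ∧ q ∈ m

/-- The net graph: two distinct points are adjacent iff they are collinear. -/
def netGraph {P : Type*} {k : ℕ} (L : Fin k → Finset (Finset P)) : SimpleGraph P where
  Adj p q := p ≠ q ∧ NetCollinear L p q
  symm := by
    constructor
    rintro p q ⟨hne, i, m, hm, hp, hq⟩
    exact ⟨hne.symm, i, m, hm, hq, hp⟩
  loopless := ⟨fun p h => h.1 rfl⟩

/-- Two lines sharing two distinct points are equal. -/
lemma net_line_unique {P : Type*} {k : ℕ} {L : Fin k → Finset (Finset P)}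
    (hpart : ∀ i : Fin k, ∀ p : P, ∃! m, m ∈ L i ∧ p ∈ m)
    (hinter : ∀ i j : Fin k, i ≠ j → ∀ ℓ ∈ L i, ∀ m ∈ L j, ∃! p : P, p ∈ ℓ ∧ p ∈ m)
    {i j : Fin k} {m m' : Finset P} (hm : m ∈ L i) (hm' : m' ∈ L j)
    {p q : P} (hpq : p ≠ q) (hpm : p ∈ m) (hqm : q ∈ m) (hpm' : p ∈ m') (hqm' : q ∈ m') :
    m = m' := by
  rcases eq_or_ne i j with rfl | hij
  · obtain ⟨u, -, hu⟩ := hpart i p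
    rw [hu m ⟨hm, hpm⟩, hu m' ⟨hm', hpm'⟩]
  · obtain ⟨u, -, hu⟩ := hinter i j hij m hm m' hm'
    exact absurd ((hu p ⟨hpm, hpm'⟩).trans (hu q ⟨hqm, hqm'⟩).symm) hpq

/-- Let `(P, L₁, …, L_k)` be a net of order `n` and degree `k` with `n > (k-1)²`.  Let
`x₁ ≠ x₂` be collinear points, let `ℓ` be the (unique) line containing both, and let
`H = {x₁, x₂} ∪ (N(x₁) ∩ N(x₂))` where `N` is the neighborhood in the net graph.  Then
`ℓ = {x ∈ H : |N(x) ∩ H| ≥ n - 1}`: the line through two adjacent vertices of a net graph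
is determined by degrees inside `H`. -/
theorem net_line_eq_high_degree_vertices (P : Type*) [Fintype P] (n k : ℕ)
    (L : Fin k → Finset (Finset P))
    (hcardP : Fintype.card P = n ^ 2)
    (hline : ∀ i : Fin k, ∀ m ∈ L i, m.card = n)
    (hpart : ∀ i : Fin k, ∀ p : P, ∃! m, m ∈ L i ∧ p ∈ m)
    (hinter : ∀ i j : Fin k, i ≠ j → ∀ ℓ ∈ L i, ∀ m ∈ L j, ∃! p : P, p ∈ ℓ ∧ p ∈ m)
    (hnk : n > (k - 1) ^ 2)
    (x₁ x₂ : P) (hx : x₁ ≠ x₂)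
    (ℓ : Finset P) (hℓ : ∃ i : Fin k, ℓ ∈ L i) (hx₁ : x₁ ∈ ℓ) (hx₂ : x₂ ∈ ℓ)
    (H : Set P)
    (hH : H = {x₁, x₂} ∪ ((netGraph L).neighborSet x₁ ∩ (netGraph L).neighborSet x₂)) :
    (ℓ : Set P) = {x ∈ H | n - 1 ≤ ((netGraph L).neighborSet x ∩ H).ncard} := by
  classical
  obtain ⟨i₀, hℓ0⟩ := hℓ
  choose f hf1 hfu using hpart
  have hadj : ∀ p q : P, (netGraph L).Adj p q ↔ p ≠ q ∧ NetCollinear L p q := fun p q => Iff.rfl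
  -- every point of ℓ lies in H
  have hℓH : ∀ x ∈ ℓ, x ∈ H := by
    intro x hxℓ
    rw [hH]
    rcases eq_or_ne x x₁ with rfl | h1
    · exact Or.inl (Or.inl rfl)
    rcases eq_or_ne x x₂ with rfl | h2
    · exact Or.inl (Or.inr rfl)
    refine Or.inr ⟨?_, ?_⟩
    · exact ⟨h1.symm, ⟨i₀, ℓ, hℓ0, hx₁, hxℓ⟩⟩
    · exact ⟨h2.symm, ⟨i₀, ℓ, hℓ0, hx₂, hxℓ⟩⟩
  -- the line of class i through a point is f i p
  have key : ∀ (i : Fin k) (m : Finset P), m ∈ L i → ∀ p ∈ m, m = f i p :=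
    fun i m hm p hp => hfu i p m ⟨hm, hp⟩
  -- any adjacency is witnessed by some canonical line
  have hclass : ∀ z w : P, (netGraph L).Adj z w → ∃ i, w ∈ f i z := by
    rintro z w ⟨-, i, m, hm, hz, hw⟩
    exact ⟨i, (key i m hm z hz) ▸ hw⟩
  have hcard_erase : (Finset.univ.erase i₀).card = k - 1 := by
    rw [Finset.card_erase_of_mem (Finset.mem_univ _), Finset.card_univ, Fintype.card_fin]
  ext x
  simp only [Finset.coe_sort_coe, Set.mem_setOf_eq, Finset.mem_coe]
  constructor
  · -- forward: x ∈ ℓ has high degree in H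
    intro hxℓ
    refine ⟨hℓH x hxℓ, ?_⟩
    have hsub : (↑(ℓ.erase x) : Set P) ⊆ (netGraph L).neighborSet x ∩ H := by
      intro z hz
      rw [Finset.mem_coe, Finset.mem_erase] at hz
      exact ⟨⟨Ne.symm hz.1, ⟨i₀, ℓ, hℓ0, hxℓ, hz.2⟩⟩, hℓH z hz.2⟩
    calc n - 1 = (ℓ.erase x).card := by
          rw [Finset.card_erase_of_mem hxℓ, hline i₀ ℓ hℓ0]
      _ = (↑(ℓ.erase x) : Set P).ncard := (Set.ncard_coe_finset _).symm
      _ ≤ _ := Set.ncard_le_ncard hsub (Set.toFinite _)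
  · -- reverse: a point of H off the line has low degree
    rintro ⟨hxH, hdeg⟩
    by_contra hxℓ
    -- x is a common neighbor of x₁ and x₂
    have hxadj : (netGraph L).Adj x₁ x ∧ (netGraph L).Adj x₂ x := by
      rw [hH] at hxH
      rcases hxH with (rfl | rfl) | ⟨h1, h2⟩
      · exact absurd hx₁ hxℓ
      · exact absurd hx₂ hxℓ
      · exact ⟨h1, h2⟩
    -- canonical classes for lines through x₁ resp. x₂
    set c₁ : P → Fin k := fun w => if h : ∃ i, w ∈ f i x₁ then h.choose else i₀ with hc₁
    set c₂ : P → Fin k := fun w => if h : ∃ i, w ∈ f i x₂ then h.choose else i₀ with hc₂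
    have hc₁spec : ∀ w, (∃ i, w ∈ f i x₁) → w ∈ f (c₁ w) x₁ := by
      intro w h
      simp only [hc₁, dif_pos h]
      exact h.choose_spec
    have hc₂spec : ∀ w, (∃ i, w ∈ f i x₂) → w ∈ f (c₂ w) x₂ := by
      intro w h
      simp only [hc₂, dif_pos h]
      exact h.choose_spec
    -- facts about points of H off ℓ
    have hSfacts : ∀ w ∈ H \ (↑ℓ : Set P),
        w ∈ f (c₁ w) x₁ ∧ w ∈ f (c₂ w) x₂ ∧ c₁ w ≠ i₀ ∧ c₂ w ≠ i₀ ∧ c₁ w ≠ c₂ w := by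
      rintro w ⟨hwH, hwℓ⟩
      have hwadj : (netGraph L).Adj x₁ w ∧ (netGraph L).Adj x₂ w := by
        rw [hH] at hwH
        rcases hwH with (rfl | rfl) | ⟨h1, h2⟩
        · exact absurd hx₁ hwℓ
        · exact absurd hx₂ hwℓ
        · exact ⟨h1, h2⟩
      have h1 := hc₁spec w (hclass _ _ hwadj.1)
      have h2 := hc₂spec w (hclass _ _ hwadj.2)
      have hfℓ : ℓ = f i₀ x₁ := key i₀ ℓ hℓ0 x₁ hx₁
      have hfℓ' : ℓ = f i₀ x₂ := key i₀ ℓ hℓ0 x₂ hx₂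
      refine ⟨h1, h2, ?_, ?_, ?_⟩
      · intro h; rw [h, ← hfℓ] at h1; exact hwℓ h1
      · intro h; rw [h, ← hfℓ'] at h2; exact hwℓ h2
      · intro h
        -- w ∈ f i x₁ and w ∈ f i x₂ with i := c₁ w ⇒ these lines coincide ⇒ = ℓ
        have e1 : f (c₁ w) x₁ = f (c₁ w) w := key _ _ (hf1 (c₁ w) x₁).1 w h1
        have e2 : f (c₂ w) x₂ = f (c₂ w) w := key _ _ (hf1 (c₂ w) x₂).1 w h2
        rw [h] at e1
        have hx₁m : x₁ ∈ f (c₂ w) w := e1 ▸ (hf1 (c₂ w) x₁).2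
        have hx₂m : x₂ ∈ f (c₂ w) w := e2 ▸ (hf1 (c₂ w) x₂).2
        have : f (c₂ w) w = ℓ :=
          net_line_unique (fun i p => ⟨f i p, hf1 i p, fun y hy => hfu i p y hy⟩)
            hinter (hf1 (c₂ w) w).1 hℓ0 hx hx₁m hx₂m hx₁ hx₂
        exact hwℓ (this ▸ (hf1 (c₂ w) w).2)
    -- |H \ ℓ| ≤ |offDiag (univ.erase i₀)|
    have hSbound : (H \ (↑ℓ : Set P)).ncard ≤ ((Finset.univ.erase i₀).offDiag).card := by
      rw [← Set.ncard_coe_finset]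
      apply Set.ncard_le_ncard_of_injOn (fun w => (c₁ w, c₂ w))
      · intro w hw
        obtain ⟨-, -, h3, h4, h5⟩ := hSfacts w hw
        simp only [Finset.coe_offDiag, Set.mem_offDiag, Finset.mem_coe,
          Finset.mem_erase, Finset.mem_univ, and_true]
        exact ⟨h3, h4, h5⟩
      · intro w hw w' hw' hww
        obtain ⟨h1, h2, -, -, h5⟩ := hSfacts w hw
        obtain ⟨h1', h2', -, -, -⟩ := hSfacts w' hw'
        have e1 : c₁ w = c₁ w' := congrArg Prod.fst hww
        have e2 : c₂ w = c₂ w' := congrArg Prod.snd hww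
        rw [← e1] at h1'
        rw [← e2] at h2'
        obtain ⟨u, -, hu⟩ := hinter (c₁ w) (c₂ w) h5 (f (c₁ w) x₁) (hf1 _ _).1
          (f (c₂ w) x₂) (hf1 _ _).1
        exact (hu w ⟨h1, h2⟩).trans (hu w' ⟨h1', h2'⟩).symm
    -- |N(x) ∩ ℓ| ≤ k - 1
    have hNℓ : ((netGraph L).neighborSet x ∩ (↑ℓ : Set P)).ncard ≤ k - 1 := by
      rw [← hcard_erase, ← Set.ncard_coe_finset]
      set c₃ : P → Fin k := fun w => if h : ∃ i, w ∈ f i x then h.choose else i₀ with hc₃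
      have hc₃spec : ∀ w, (∃ i, w ∈ f i x) → w ∈ f (c₃ w) x := by
        intro w h
        simp only [hc₃, dif_pos h]
        exact h.choose_spec
      apply Set.ncard_le_ncard_of_injOn c₃
      · rintro z ⟨hz1, hz2⟩
        have hz3 := hc₃spec z (hclass _ _ hz1)
        simp only [Finset.coe_erase, Set.mem_diff, Finset.mem_coe, Finset.mem_univ,
          Set.mem_singleton_iff, true_and]
        intro h
        rw [h] at hz3
        -- z ∈ f i₀ x and z ∈ ℓ ⇒ f i₀ x = ℓ ⇒ x ∈ ℓ, contradiction
        have : f i₀ x = f i₀ z := key _ _ (hf1 i₀ x).1 z hz3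
        have : ℓ = f i₀ x := (key i₀ ℓ hℓ0 z hz2).trans this.symm
        exact hxℓ (this ▸ (hf1 i₀ x).2)
      · rintro z ⟨hz1, hz2⟩ z' ⟨hz1', hz2'⟩ hzz
        have hz3 := hc₃spec z (hclass _ _ hz1)
        have hz3' := hc₃spec z' (hclass _ _ hz1')
        rw [← hzz] at hz3'
        have hne : c₃ z ≠ i₀ := by
          intro h
          rw [h] at hz3
          have : f i₀ x = f i₀ z := key _ _ (hf1 i₀ x).1 z hz3
          have : ℓ = f i₀ x := (key i₀ ℓ hℓ0 z hz2).trans this.symm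
          exact hxℓ (this ▸ (hf1 i₀ x).2)
        obtain ⟨u, -, hu⟩ := hinter i₀ (c₃ z) (Ne.symm hne) ℓ hℓ0 (f (c₃ z) x) (hf1 _ _).1
        exact (hu z ⟨hz2, hz3⟩).trans (hu z' ⟨hz2', hz3'⟩).symm
    -- x itself is in H \ ℓ, so k ≥ 3
    have hxS : x ∈ H \ (↑ℓ : Set P) := ⟨hxH, hxℓ⟩
    have hk3 : 3 ≤ k := by
      obtain ⟨-, -, h3, h4, h5⟩ := hSfacts x hxS
      have : ({c₁ x, c₂ x, i₀} : Finset (Fin k)).card = 3 :=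
        Finset.card_eq_three.mpr ⟨_, _, _, h5, h3, h4, rfl⟩
      calc 3 = ({c₁ x, c₂ x, i₀} : Finset (Fin k)).card := this.symm
        _ ≤ Fintype.card (Fin k) := Finset.card_le_univ _
        _ = k := Fintype.card_fin _
    -- N(x) ∩ H ⊆ (N(x) ∩ ℓ) ∪ ((H \ ℓ) \ {x})
    have hcover : (netGraph L).neighborSet x ∩ H ⊆
        ((netGraph L).neighborSet x ∩ (↑ℓ : Set P)) ∪ ((H \ (↑ℓ : Set P)) \ {x}) := by
      rintro z ⟨hz1, hz2⟩
      by_cases hzℓ : z ∈ ℓ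
      · exact Or.inl ⟨hz1, hzℓ⟩
      · refine Or.inr ⟨⟨hz2, hzℓ⟩, ?_⟩
        simp only [Set.mem_singleton_iff]
        rintro rfl
        exact (netGraph L).loopless.irrefl z hz1
    have hdiff : ((H \ (↑ℓ : Set P)) \ {x}).ncard + 1 = (H \ (↑ℓ : Set P)).ncard :=
      Set.ncard_diff_singleton_add_one hxS (Set.toFinite _)
    have htotal : ((netGraph L).neighborSet x ∩ H).ncard ≤
        ((netGraph L).neighborSet x ∩ (↑ℓ : Set P)).ncard + ((H \ (↑ℓ : Set P)) \ {x}).ncard :=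
      le_trans (Set.ncard_le_ncard hcover (Set.toFinite _)) (Set.ncard_union_le _ _)
    obtain ⟨k', rfl⟩ : ∃ k', k = k' + 3 := ⟨k - 3, by omega⟩
    have hoff : ((Finset.univ.erase i₀).offDiag).card = (k' + 2) * (k' + 2) - (k' + 2) := by
      rw [Finset.offDiag_card, hcard_erase]
      have e : k' + 3 - 1 = k' + 2 := rfl
      rw [e]
    have hnn : (k' + 2) * (k' + 2) < n := by
      have e : k' + 3 - 1 = k' + 2 := rfl
      have : (k' + 3 - 1) ^ 2 = (k' + 2) * (k' + 2) := by rw [e]; ring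
      omega
    omega
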